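/- Let G be an NB-irreducible graph. If the cycle condition holds for G, then the suspended path condition holds for G. -/

import Mathlib

open Finset Filter

namespace NB

variable {V : Type} [Fintype V] [DecidableEq V] (G : SimpleGraph V) [DecidableRel G.Adj]

/-- Transition relation between darts: `e → f` iff the head of `e` is the tail of `f`
and `f` is not the reversal of `e`. -/
def Step (d e : G.Dart) : Prop := d.snd = e.fst ∧ e ≠ d.symm

instance (d e : G.Dart) : Decidable (Step G d e) :=
  inferInstanceAs (Decidable (d.snd = e.fst ∧ e ≠ d.symm))

/-- `outdeg(e) = deg(h(e)) - 1`. -/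
def outdeg (d : G.Dart) : ℕ := G.degree d.snd - 1

/-- `indeg(e) = deg(t(e)) - 1`. -/
def indeg (d : G.Dart) : ℕ := G.degree d.fst - 1

/-- The non-backtracking adjacency matrix. -/
def B : Matrix G.Dart G.Dart ℝ := fun d e => if Step G d e then 1 else 0

/-- The NBRW transition matrix. -/
noncomputable def transMat : Matrix G.Dart G.Dart ℝ :=
  fun d e => if Step G d e then ((outdeg G d : ℝ))⁻¹ else 0

/-- NB-irreducibility: connected, min degree ≥ 2, max degree > 2. -/
def NBIrreducible : Prop :=
  G.Connected ∧ (∀ v, 2 ≤ G.degree v) ∧ (∃ v, 2 < G.degree v)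

/-- `Λ(G)`, the geometric mean of out-degrees over directed edges. -/
noncomputable def Lambda : ℝ :=
  (∏ d : G.Dart, (outdeg G d : ℝ)) ^ ((Fintype.card G.Dart : ℝ)⁻¹)

/-- The Perron (largest real) eigenvalue of a matrix. -/
noncomputable def perron {n : Type} [Fintype n] (M : Matrix n n ℝ) : ℝ :=
  sSup {r : ℝ | ∃ v : n → ℝ, v ≠ 0 ∧ M.mulVec v = r • v}

/-- A length-`ℓ` non-backtracking walk is a sequence of `ℓ+1` darts with consecutive
transitions. -/
def IsNBWalk {ℓ : ℕ} (ω : Fin (ℓ + 1) → G.Dart) : Prop :=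
  ∀ i : Fin ℓ, Step G (ω i.castSucc) (ω i.succ)

instance {ℓ : ℕ} (ω : Fin (ℓ + 1) → G.Dart) : Decidable (IsNBWalk G ω) :=
  inferInstanceAs (Decidable (∀ i : Fin ℓ, Step G (ω i.castSucc) (ω i.succ)))

/-- The set `Ω_ℓ` of length-`ℓ` non-backtracking walks. -/
def NBWalk (ℓ : ℕ) : Type := {ω : Fin (ℓ + 1) → G.Dart // IsNBWalk G ω}

instance (ℓ : ℕ) : Fintype (NBWalk G ℓ) := Subtype.fintype _

/-- The NBRW probability of a walk, started from the uniform stationary distribution. -/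
noncomputable def mu {ℓ : ℕ} (ω : NBWalk G ℓ) : ℝ :=
  (Fintype.card G.Dart : ℝ)⁻¹ * ∏ i : Fin ℓ, ((outdeg G (ω.1 i.castSucc) : ℝ))⁻¹

/-- Expectation over `Ω_ℓ` with respect to `μ`. -/
noncomputable def expect {ℓ : ℕ} (X : NBWalk G ℓ → ℝ) : ℝ :=
  ∑ ω : NBWalk G ℓ, mu G ω * X ω

/-- Variance over `Ω_ℓ` with respect to `μ`. -/
noncomputable def var {ℓ : ℕ} (X : NBWalk G ℓ → ℝ) : ℝ :=
  expect G (fun ω => (X ω - expect G X) ^ 2)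

/-- `R_ℓ(ω) = ∑ log₂ outdeg(e_i)`: the number of random bits consumed. -/
noncomputable def bits {ℓ : ℕ} (ω : NBWalk G ℓ) : ℝ :=
  ∑ i : Fin ℓ, Real.logb 2 (outdeg G (ω.1 i.castSucc))

/-- A suspended path `(e_0, …, e_n)` (of length `n+1`). -/
def IsSuspendedPath {n : ℕ} (P : Fin (n + 1) → G.Dart) : Prop :=
  (∀ i : Fin n, Step G (P i.castSucc) (P i.succ)) ∧
  (∀ i : Fin n, outdeg G (P i.castSucc) = 1) ∧
  1 < outdeg G (P (Fin.last n)) ∧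
  (∀ i : Fin n, indeg G (P i.succ) = 1) ∧
  1 < indeg G (P 0)

/-- The suspended path condition: `outdeg(P)·indeg(P) = Λ(G)^{2|P|}`. -/
noncomputable def SuspendedPathCondition : Prop :=
  ∀ (n : ℕ) (P : Fin (n + 1) → G.Dart), IsSuspendedPath G P →
    (outdeg G (P (Fin.last n)) : ℝ) * (indeg G (P 0) : ℝ) = Lambda G ^ (2 * (n + 1))

/-- A non-backtracking cycle `(e_0, …, e_n)` (of length `n+1`). -/
def IsNBCycle {n : ℕ} (C : Fin (n + 1) → G.Dart) : Prop :=
  ∀ i : Fin (n + 1), Step G (C i) (C (i + 1))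

/-- The cycle condition: `∏_{e∈C} outdeg(e) = Λ(G)^{|C|}`. -/
noncomputable def CycleCondition : Prop :=
  ∀ (n : ℕ) (C : Fin (n + 1) → G.Dart), IsNBCycle G C →
    (∏ i : Fin (n + 1), (outdeg G (C i) : ℝ)) = Lambda G ^ (n + 1)


/-! ### Auxiliary lemmas -/

lemma step_symm {d e : G.Dart} (h : Step G d e) : Step G e.symm d.symm := by
  obtain ⟨h1, h2⟩ := h
  refine ⟨h1.symm, ?_⟩
  rw [SimpleGraph.Dart.symm_symm]
  intro hde
  exact h2 (by rw [hde])

lemma outdeg_symm (d : G.Dart) : outdeg G d.symm = indeg G d := rfl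

lemma card_darts_out (v : V) :
    (Finset.univ.filter (fun g : G.Dart => g.fst = v)).card = G.degree v := by
  classical
  rw [← SimpleGraph.card_neighborFinset_eq_degree]
  refine Finset.card_bij' (fun (g : G.Dart) _ => g.snd)
    (fun (w : V) hw => SimpleGraph.Dart.mk (v, w)
      (by rwa [SimpleGraph.mem_neighborFinset] at hw)) ?_ ?_ ?_ ?_
  · intro g hg
    simp only [Finset.mem_filter] at hg
    rw [SimpleGraph.mem_neighborFinset]
    exact hg.2 ▸ g.adj
  · intro w hw
    simp
  · intro g hg
    simp only [Finset.mem_filter] at hg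
    apply SimpleGraph.Dart.ext
    exact Prod.ext hg.2.symm rfl
  · intro w hw
    rfl

lemma exists_dart_out (v : V) (xs : Finset G.Dart) (hlt : xs.card < G.degree v) :
    ∃ g : G.Dart, g.fst = v ∧ g ∉ xs := by
  classical
  by_contra hcon
  push_neg at hcon
  have hsub : (Finset.univ.filter (fun g : G.Dart => g.fst = v)) ⊆ xs := by
    intro g hg
    simp only [Finset.mem_filter] at hg
    exact hcon g hg.2
  have := Finset.card_le_card hsub
  rw [card_darts_out] at this
  omega

/-- Reachability in the non-backtracking dart graph. -/
def Reach (d f : G.Dart) : Prop := Relation.ReflTransGen (Step G) d f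

lemma reach_rev {d f : G.Dart} (h : Reach G d f) : Reach G f.symm d.symm := by
  induction h with
  | refl => exact Relation.ReflTransGen.refl
  | tail _ hstep ih => exact Relation.ReflTransGen.head (step_symm G hstep) ih

/-- Core lemma: in an NB-irreducible graph, every dart can reach its own reversal
by a non-backtracking walk. -/
lemma reach_symm_self (h : NBIrreducible G) (e : G.Dart) : Reach G e e.symm := by
  classical
  by_contra hne
  obtain ⟨hconn, hdeg, v0, hv0⟩ := h
  set S : Finset G.Dart := Finset.univ.filter (fun d => Reach G e d) with hSdef
  have hmem : ∀ d, d ∈ S ↔ Reach G e d := by intro d; simp [hSdef]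
  have heS : e ∈ S := (hmem e).2 Relation.ReflTransGen.refl
  have hstep : ∀ d ∈ S, ∀ g, Step G d g → g ∈ S := by
    intro d hd g hg
    exact (hmem g).2 (Relation.ReflTransGen.tail ((hmem d).1 hd) hg)
  have hnotsymm : ∀ d ∈ S, d.symm ∉ S := by
    intro d hd hds
    apply hne
    have h1 : Reach G e d := (hmem d).1 hd
    have h2 : Reach G e d.symm := (hmem d.symm).1 hds
    have h3 : Reach G d e.symm := by
      have := reach_rev G h2
      rwa [SimpleGraph.Dart.symm_symm] at this
    exact h1.trans h3
  have hsucc : ∀ d ∈ S, ∀ g : G.Dart, g.fst = d.snd → g = d.symm ∨ g ∈ S := by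
    intro d hd g hfst
    by_cases hgd : g = d.symm
    · exact Or.inl hgd
    · exact Or.inr (hstep d hd g ⟨hfst.symm, hgd⟩)
  have hinj : ∀ d ∈ S, ∀ d' ∈ S, d.snd = d'.snd → d = d' := by
    intro d hd d' hd' hsnd
    rcases hsucc d hd d'.symm hsnd.symm with h1 | h1
    · have h2 : d'.symm.symm = d.symm.symm := by rw [h1]
      rw [SimpleGraph.Dart.symm_symm, SimpleGraph.Dart.symm_symm] at h2
      exact h2.symm
    · exact absurd h1 (hnotsymm d' hd')
  set H : Finset V := S.image (fun d : G.Dart => d.snd) with hHdef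
  have hcard : H.card = S.card :=
    Finset.card_image_of_injOn (fun d hd d' hd' hdd => hinj d hd d' hd' hdd)
  have hfiber : ∀ v ∈ H, (S.filter (fun d => d.fst = v)).card = G.degree v - 1 := by
    intro v hv
    obtain ⟨c, hc, hcv⟩ := Finset.mem_image.1 hv
    have hset : S.filter (fun d => d.fst = v)
        = (Finset.univ.filter (fun g : G.Dart => g.fst = v)).erase c.symm := by
      ext g
      simp only [Finset.mem_filter, Finset.mem_erase, Finset.mem_univ, true_and]
      constructor
      · rintro ⟨hgS, hgv⟩
        refine ⟨?_, hgv⟩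
        rintro rfl
        exact hnotsymm c hc hgS
      · rintro ⟨hgc, hgv⟩
        refine ⟨?_, hgv⟩
        rcases hsucc c hc g (by rw [hgv, ← hcv]) with h1 | h1
        · exact absurd h1 hgc
        · exact h1
    rw [hset, Finset.card_erase_of_mem (by
      simp only [Finset.mem_filter, Finset.mem_univ, true_and]
      show c.snd = v
      exact hcv), card_darts_out]
  set SH : Finset G.Dart := S.filter (fun d => d.fst ∈ H) with hSHdef
  have hSHcard : SH.card = ∑ v ∈ H, (G.degree v - 1) := by
    have h1 : SH.card = ∑ v ∈ H, (SH.filter (fun d => d.fst = v)).card :=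
      Finset.card_eq_sum_card_fiberwise (fun d hd => (Finset.mem_filter.1 hd).2)
    rw [h1]
    apply Finset.sum_congr rfl
    intro v hv
    rw [← hfiber v hv]
    congr 1
    ext g
    simp only [hSHdef, Finset.mem_filter]
    constructor
    · rintro ⟨⟨h1, h2⟩, h3⟩; exact ⟨h1, h3⟩
    · rintro ⟨h1, h3⟩; exact ⟨⟨h1, h3 ▸ hv⟩, h3⟩
  have hone : ∀ v ∈ H, 1 ≤ G.degree v - 1 := fun v _ => by have := hdeg v; omega
  have hsumle : ∑ v ∈ H, (G.degree v - 1) ≤ ∑ _v ∈ H, 1 := by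
    rw [← hSHcard]
    calc SH.card ≤ S.card := Finset.card_le_card (Finset.filter_subset _ _)
    _ = H.card := hcard.symm
    _ = ∑ _v ∈ H, 1 := by simp
  have hdeg2 : ∀ v ∈ H, G.degree v = 2 := by
    intro v hv
    by_contra hv2
    have hlt : (1:ℕ) < G.degree v - 1 := by have := hdeg v; omega
    have hcontra := Finset.sum_lt_sum hone ⟨v, hv, hlt⟩
    exact lt_irrefl _ (hcontra.trans_le hsumle)
  have hsumeq : ∑ v ∈ H, (G.degree v - 1) = H.card := by
    rw [Finset.sum_congr rfl (fun v hv => by rw [hdeg2 v hv])]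
    simp
  have hSHS : SH = S := by
    apply Finset.eq_of_subset_of_card_le (Finset.filter_subset _ _)
    rw [hSHcard, hsumeq, hcard]
  have hfstH : ∀ d ∈ S, d.fst ∈ H := by
    intro d hd
    have : d ∈ SH := hSHS ▸ hd
    exact (Finset.mem_filter.1 this).2
  have hadjcl : ∀ v ∈ H, ∀ w, G.Adj v w → w ∈ H := by
    intro v hv w hvw
    obtain ⟨c, hc, hcv⟩ := Finset.mem_image.1 hv
    have hfst : (SimpleGraph.Dart.mk (v, w) hvw).fst = c.snd := hcv.symm
    rcases hsucc c hc (SimpleGraph.Dart.mk (v, w) hvw) hfst with h1 | h1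
    · have hw : w = c.fst := congrArg (fun d : G.Dart => d.snd) h1
      rw [hw]
      exact hfstH c hc
    · exact Finset.mem_image.2 ⟨_, h1, rfl⟩
  have hallH : ∀ v, v ∈ H := by
    have h0 : e.snd ∈ H := Finset.mem_image.2 ⟨e, heS, rfl⟩
    have key : ∀ (u w : V), G.Walk u w → u ∈ H → w ∈ H := by
      intro u w p
      induction p with
      | nil => exact id
      | cons hadj _p ih => intro hu; exact ih (hadjcl _ hu _ hadj)
    intro v
    obtain ⟨p⟩ := hconn.preconnected e.snd v
    exact key _ _ p h0
  have := hdeg2 v0 (hallH v0)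
  omega

lemma reach_out (h : NBIrreducible G) {d g : G.Dart} (hg : g.fst = d.snd) : Reach G d g := by
  by_cases hgd : g = d.symm
  · rw [hgd]; exact reach_symm_self G h d
  · exact Relation.ReflTransGen.single ⟨hg.symm, hgd⟩

/-- Strong connectivity of the non-backtracking dart graph. -/
lemma reach_all (h : NBIrreducible G) (d f : G.Dart) : Reach G d f := by
  have key : ∀ (u w : V), G.Walk u w → ∀ d : G.Dart, d.snd = u →
      ∃ c : G.Dart, Reach G d c ∧ c.snd = w := by
    intro u w p
    induction p with
    | nil => exact fun d hd => ⟨d, Relation.ReflTransGen.refl, hd⟩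
    | @cons u x w hadj _p ih =>
      intro d hd
      obtain ⟨c, hc1, hc2⟩ := ih (SimpleGraph.Dart.mk (u, x) hadj) rfl
      exact ⟨c, (reach_out G h
        (show (SimpleGraph.Dart.mk (u, x) hadj).fst = d.snd from hd.symm)).trans hc1, hc2⟩
  obtain ⟨p⟩ := h.1.preconnected d.snd f.fst
  obtain ⟨c, hc1, hc2⟩ := key _ _ p d rfl
  exact hc1.trans (reach_out G h (show f.fst = c.snd from hc2.symm))

lemma getLast?_cons_of_ne_nil {α : Type*} (a : α) {l : List α} (h : l ≠ []) :
    (a :: l).getLast? = l.getLast? := by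
  cases l with
  | nil => simp at h
  | cons b t => simp [List.getLast?_cons_cons]

lemma reach_chain {d f : G.Dart} (h : Reach G d f) :
    ∃ l : List G.Dart, l ≠ [] ∧ l.Chain' (Step G) ∧ l.head? = some d ∧ l.getLast? = some f := by
  induction h using Relation.ReflTransGen.head_induction_on with
  | refl => exact ⟨[f], by simp [List.Chain']⟩
  | @head a c h' _ ih =>
    obtain ⟨l, hne, hch, hhd, hlast⟩ := ih
    refine ⟨a :: l, by simp, ?_, rfl, ?_⟩
    · unfold List.Chain'; rw [List.isChain_cons]
      refine ⟨fun y hy => ?_, hch⟩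
      rw [hhd, Option.mem_some_iff] at hy
      exact hy ▸ h'
    · rwa [getLast?_cons_of_ne_nil _ hne]

/-- The reversal of a list of darts. -/
def drev (l : List G.Dart) : List G.Dart := (l.map SimpleGraph.Dart.symm).reverse

lemma drev_ne_nil {l : List G.Dart} (h : l ≠ []) : drev G l ≠ [] := by
  simp [drev, h]

lemma drev_length (l : List G.Dart) : (drev G l).length = l.length := by
  simp [drev]

lemma drev_chain' {l : List G.Dart} (h : l.Chain' (Step G)) :
    (drev G l).Chain' (Step G) := by
  unfold List.Chain' at *; rw [drev, List.isChain_reverse, List.isChain_map]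
  exact h.imp (fun a b hab => step_symm G hab)

lemma drev_head? (l : List G.Dart) :
    (drev G l).head? = l.getLast?.map SimpleGraph.Dart.symm := by
  rw [drev, List.head?_reverse, List.getLast?_map]

lemma drev_getLast? (l : List G.Dart) :
    (drev G l).getLast? = l.head?.map SimpleGraph.Dart.symm := by
  rw [drev, List.getLast?_reverse, List.head?_map]

lemma drev_prod_outdeg (l : List G.Dart) :
    ((drev G l).map (fun d => (outdeg G d : ℝ))).prod
      = (l.map (fun d => (indeg G d : ℝ))).prod := by
  rw [drev, List.map_reverse, List.prod_reverse, List.map_map]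
  rfl

/-- The cycle condition, applied to a cyclic list of darts. -/
lemma cycleCond_list (hc : CycleCondition G) (l : List G.Dart) (hne : l ≠ [])
    (hch : l.Chain' (Step G)) (hwrap : Step G (l.getLast hne) (l.head hne)) :
    (l.map (fun d => (outdeg G d : ℝ))).prod = Lambda G ^ l.length := by
  obtain ⟨n, hlen⟩ : ∃ n, l.length = n + 1 := by
    cases l with
    | nil => exact absurd rfl hne
    | cons a l' => exact ⟨l'.length, rfl⟩
  have hpos : 0 < l.length := by omega
  have hcyc : IsNBCycle G (fun i : Fin (n + 1) => l.get (Fin.cast hlen.symm i)) := by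
    intro i
    simp only []
    by_cases hi : i = Fin.last n
    · have h0 : ((i + 1 : Fin (n + 1)) : ℕ) = 0 := by rw [Fin.val_add_one, if_pos hi]
      have hCl : l.get (Fin.cast hlen.symm i) = l.getLast hne := by
        rw [List.getLast_eq_getElem]
        simp only [List.get_eq_getElem, Fin.coe_cast, hi, Fin.val_last]
        congr 1
        omega
      have hC0 : l.get (Fin.cast hlen.symm (i + 1)) = l.head hne := by
        have e0 : l.get (Fin.cast hlen.symm (i + 1)) = l.get ⟨0, hpos⟩ :=
          congrArg _ (Fin.ext h0)
        rw [e0]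
        simp only [List.get_eq_getElem]
        exact List.getElem_zero hpos
      rw [hCl, hC0]; exact hwrap
    · have h1 : ((i + 1 : Fin (n + 1)) : ℕ) = (i : ℕ) + 1 := by
        rw [Fin.val_add_one, if_neg hi]
      have hilt : (i : ℕ) < n := Fin.val_lt_last hi
      have hstep := List.isChain_iff_getElem.1 hch (i : ℕ) (by omega)
      have e1 : l.get (Fin.cast hlen.symm i) = l.get ⟨(i : ℕ), by omega⟩ :=
        congrArg _ (Fin.ext rfl)
      have e2 : l.get (Fin.cast hlen.symm (i + 1)) = l.get ⟨(i : ℕ) + 1, by omega⟩ :=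
        congrArg _ (Fin.ext h1)
      rw [e1, e2]
      exact hstep
  have hofn : List.ofFn (fun i : Fin (n + 1) => l.get (Fin.cast hlen.symm i)) = l := by
    apply List.ext_getElem
    · simp [hlen]
    · intro i h1 h2
      simp only [List.getElem_ofFn, List.get_eq_getElem, Fin.coe_cast]
  have hprod : (l.map (fun d => (outdeg G d : ℝ))).prod
      = ∏ i : Fin (n + 1), (outdeg G (l.get (Fin.cast hlen.symm i)) : ℝ) := by
    conv_lhs => rw [← hofn]
    rw [List.map_ofFn, List.prod_ofFn]
    rfl
  have hcc := hc n _ hcyc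
  rw [hprod, hcc, hlen]

lemma lambda_pos (h : NBIrreducible G) : 0 < Lambda G := by
  apply Real.rpow_pos_of_pos
  apply Finset.prod_pos
  intro d _
  have := h.2.1 d.snd
  have : 1 ≤ outdeg G d := by unfold outdeg; omega
  exact_mod_cast Nat.lt_of_lt_of_le Nat.zero_lt_one this

lemma append_getLast? {α : Type*} (l₁ l₂ : List α) {x : α} (h : l₂.getLast? = some x) :
    (l₁ ++ l₂).getLast? = some x := by
  rw [List.getLast?_append, h]; rfl

lemma append_head? {α : Type*} (l₁ l₂ : List α) {y : α} (h : l₁.head? = some y) :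
    (l₁ ++ l₂).head? = some y := by
  rw [List.head?_append, h]; rfl

lemma chain'_append_helper {l₁ l₂ : List G.Dart} {x y : G.Dart}
    (h1 : l₁.Chain' (Step G)) (h2 : l₂.Chain' (Step G))
    (hl : l₁.getLast? = some x) (hh : l₂.head? = some y) (hs : Step G x y) :
    (l₁ ++ l₂).Chain' (Step G) := by
  unfold List.Chain'; rw [List.isChain_append]
  refine ⟨h1, h2, fun a ha b hb => ?_⟩
  rw [hl, Option.mem_some_iff] at ha
  rw [hh, Option.mem_some_iff] at hb
  rw [← ha, ← hb]
  exact hs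

lemma wrap_helper {l : List G.Dart} (hne : l ≠ []) {x y : G.Dart}
    (hlast : l.getLast? = some x) (hhead : l.head? = some y) (hs : Step G x y) :
    Step G (l.getLast hne) (l.head hne) := by
  rw [List.getLast?_eq_getLast hne] at hlast
  rw [List.head?_eq_head hne] at hhead
  rw [Option.some.inj hlast, Option.some.inj hhead]
  exact hs

/-- The cycle condition implies the suspended path condition. -/
theorem cycle_implies_suspended (h : NBIrreducible G)
    (hc : CycleCondition G) : SuspendedPathCondition G := by
  intro n P hP
  obtain ⟨hchain, hout1, houtlast, hin1, hin0⟩ := hP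
  have hdeg := h.2.1
  have hΛ := lambda_pos G h
  -- the path as a list
  have hplen : (List.ofFn P).length = n + 1 := List.length_ofFn
  have hpne : List.ofFn P ≠ [] := by
    intro hcon
    have := congrArg List.length hcon
    rw [hplen] at this
    simp at this
  have hpchain : (List.ofFn P).Chain' (Step G) := by
    unfold List.Chain'; rw [List.isChain_iff_getElem]
    intro i hi
    rw [hplen] at hi
    have hi' : i < n := by omega
    simp only [List.getElem_ofFn]
    exact hchain ⟨i, hi'⟩
  have hphead : (List.ofFn P).head? = some (P 0) := by
    rw [List.head?_eq_head hpne]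
    congr 1
    rw [← List.getElem_zero (by rw [hplen]; omega), List.getElem_ofFn]
    exact congrArg P (Fin.ext (by simp))
  have hplast : (List.ofFn P).getLast? = some (P (Fin.last n)) := by
    rw [List.getLast?_eq_getLast hpne]
    congr 1
    rw [List.getLast_eq_getElem, List.getElem_ofFn]
    exact congrArg P (Fin.ext (by simp))
  -- the reversed path
  have hqne : drev G (List.ofFn P) ≠ [] := drev_ne_nil G hpne
  have hqchain : (drev G (List.ofFn P)).Chain' (Step G) := drev_chain' G hpchain
  have hqhead : (drev G (List.ofFn P)).head? = some (P (Fin.last n)).symm := by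
    rw [drev_head?, hplast]; rfl
  have hqlast : (drev G (List.ofFn P)).getLast? = some (P 0).symm := by
    rw [drev_getLast?, hphead]; rfl
  -- degree bounds at the two endpoints
  have hd1 : 3 ≤ G.degree (P (Fin.last n)).snd := by
    have h1 := houtlast
    unfold outdeg at h1
    omega
  have hd0 : 3 ≤ G.degree (P 0).fst := by
    have h1 := hin0
    unfold indeg at h1
    omega
  -- choose the connecting darts
  obtain ⟨s0, hs0fst, hs0mem⟩ := exists_dart_out G (P (Fin.last n)).snd
    {(P (Fin.last n)).symm} (by rw [Finset.card_singleton]; omega)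
  have hs0ne : s0 ≠ (P (Fin.last n)).symm := by simpa using hs0mem
  obtain ⟨g, hgfst, hgmem⟩ := exists_dart_out G (P 0).fst {P 0}
    (by rw [Finset.card_singleton]; omega)
  have hgne : g ≠ P 0 := by simpa using hgmem
  obtain ⟨s, hsfst, hsmem⟩ := exists_dart_out G (P 0).fst {P 0, g}
    (by
      have h2 : ({P 0, g} : Finset G.Dart).card ≤ 2 := by
        apply (Finset.card_insert_le _ _).trans
        rw [Finset.card_singleton]
      omega)
  have hsne : s ≠ P 0 ∧ s ≠ g := by
    constructor <;> (intro hcon; apply hsmem; simp [hcon])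
  obtain ⟨y, hyfst, hymem⟩ := exists_dart_out G (P (Fin.last n)).snd
    {(P (Fin.last n)).symm, s0}
    (by
      have h2 : ({(P (Fin.last n)).symm, s0} : Finset G.Dart).card ≤ 2 := by
        apply (Finset.card_insert_le _ _).trans
        rw [Finset.card_singleton]
      omega)
  have hyne : y ≠ (P (Fin.last n)).symm ∧ y ≠ s0 := by
    constructor <;> (intro hcon; apply hymem; simp [hcon])
  -- the transition steps at the junctions
  have hstep1 : Step G (P (Fin.last n)) s0 := ⟨hs0fst.symm, hs0ne⟩
  have hstepf0 : Step G g.symm (P 0) := by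
    refine ⟨hgfst, ?_⟩
    rw [SimpleGraph.Dart.symm_symm]
    exact hgne.symm
  have hstepfs : Step G g.symm s := by
    refine ⟨hgfst.trans hsfst.symm, ?_⟩
    rw [SimpleGraph.Dart.symm_symm]
    exact hsne.2
  have hstepQs : Step G (P 0).symm s := by
    refine ⟨hsfst.symm, ?_⟩
    rw [SimpleGraph.Dart.symm_symm]
    exact hsne.1
  have hstepyQ : Step G y.symm (P (Fin.last n)).symm := by
    refine ⟨hyfst, ?_⟩
    rw [SimpleGraph.Dart.symm_symm]
    exact fun hcon => hyne.1 hcon.symm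
  have hstepys0 : Step G y.symm s0 := by
    refine ⟨hyfst.trans hs0fst.symm, ?_⟩
    rw [SimpleGraph.Dart.symm_symm]
    exact fun hcon => hyne.2 hcon.symm
  -- the two connecting walks
  obtain ⟨Wl, hWne, hWch, hWhd, hWlast⟩ := reach_chain G (reach_all G h s0 g.symm)
  obtain ⟨Wl', hW'ne, hW'ch, hW'hd, hW'last⟩ := reach_chain G (reach_all G h s y.symm)
  -- the three cycles
  have hA1 := cycleCond_list G hc (List.ofFn P ++ Wl)
    (fun hcon => hpne (List.append_eq_nil_iff.mp hcon).1)
    (chain'_append_helper G hpchain hWch hplast hWhd hstep1)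
    (wrap_helper G _ (append_getLast? _ _ hWlast) (append_head? _ _ hphead) hstepf0)
  have hA2 := cycleCond_list G hc (drev G (List.ofFn P) ++ Wl')
    (fun hcon => hqne (List.append_eq_nil_iff.mp hcon).1)
    (chain'_append_helper G hqchain hW'ch hqlast hW'hd hstepQs)
    (wrap_helper G _ (append_getLast? _ _ hW'last) (append_head? _ _ hqhead) hstepyQ)
  have hA3 := cycleCond_list G hc (Wl ++ Wl')
    (fun hcon => hWne (List.append_eq_nil_iff.mp hcon).1)
    (chain'_append_helper G hWch hW'ch hWlast hW'hd hstepfs)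
    (wrap_helper G _ (append_getLast? _ _ hW'last) (append_head? _ _ hWhd) hstepys0)
  rw [List.map_append, List.prod_append, List.length_append, hplen] at hA1
  rw [List.map_append, List.prod_append, List.length_append, drev_length, hplen] at hA2
  rw [List.map_append, List.prod_append, List.length_append] at hA3
  -- the product over the path itself
  have hFp : ((List.ofFn P).map (fun d => (outdeg G d : ℝ))).prod
      = (outdeg G (P (Fin.last n)) : ℝ) := by
    rw [List.map_ofFn, List.prod_ofFn]
    rw [Fin.prod_univ_castSucc]
    have h1 : ∀ i : Fin n, ((fun d => (outdeg G d : ℝ)) ∘ P) i.castSucc = 1 := by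
      intro i
      simp only [Function.comp_apply]
      rw [hout1 i]
      norm_num
    rw [Finset.prod_congr rfl (fun i _ => h1 i)]
    simp
  have hFq : ((drev G (List.ofFn P)).map (fun d => (outdeg G d : ℝ))).prod
      = (indeg G (P 0) : ℝ) := by
    rw [drev_prod_outdeg, List.map_ofFn, List.prod_ofFn]
    rw [Fin.prod_univ_succ]
    have h1 : ∀ i : Fin n, ((fun d => (indeg G d : ℝ)) ∘ P) i.succ = 1 := by
      intro i
      simp only [Function.comp_apply]
      rw [hin1 i]
      norm_num
    rw [Finset.prod_congr rfl (fun i _ => h1 i)]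
    simp
  rw [hFp] at hA1
  rw [hFq] at hA2
  -- final algebra
  have key : (outdeg G (P (Fin.last n)) : ℝ) * (indeg G (P 0) : ℝ)
      * Lambda G ^ (Wl.length + Wl'.length)
      = Lambda G ^ (2 * (n + 1)) * Lambda G ^ (Wl.length + Wl'.length) := by
    calc (outdeg G (P (Fin.last n)) : ℝ) * (indeg G (P 0) : ℝ)
        * Lambda G ^ (Wl.length + Wl'.length)
        = (outdeg G (P (Fin.last n)) : ℝ) * (indeg G (P 0) : ℝ)
          * ((Wl.map (fun d => (outdeg G d : ℝ))).prod
            * (Wl'.map (fun d => (outdeg G d : ℝ))).prod) := by rw [hA3]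
      _ = ((outdeg G (P (Fin.last n)) : ℝ) * (Wl.map (fun d => (outdeg G d : ℝ))).prod)
          * ((indeg G (P 0) : ℝ) * (Wl'.map (fun d => (outdeg G d : ℝ))).prod) := by ring
      _ = Lambda G ^ (n + 1 + Wl.length) * Lambda G ^ (n + 1 + Wl'.length) := by
          rw [hA1, hA2]
      _ = Lambda G ^ (2 * (n + 1)) * Lambda G ^ (Wl.length + Wl'.length) := by
          rw [← pow_add, ← pow_add]
          congr 1
          ring
  exact mul_right_cancel₀ (pow_ne_zero _ (ne_of_gt hΛ)) key

end NB
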